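/- arXiv:1810.11095 — 2 statements merged into one kernel-verified Lean document; each statement's English description precedes it below -/
import Mathlib

section
/- For Lebesgue-almost every α in (0,1), the series ∑_{k=2}^∞ 1/(a_k(α) a_{k−1}(α)) diverges, where a_k(α) are the continued fraction partial quotients of α. -/
open scoped BigOperators

/-- The Gauss map `G(x) = 1/x - ⌊1/x⌋`. -/
noncomputable def gaussMap (x : ℝ) : ℝ := Int.fract (1 / x)

/-- The partial quotients of the continued fraction of `α`:
`a 0 = ⌊α⌋` and `a k = ⌊1 / G^[k-1] (fract α)⌋` for `k ≥ 1`. -/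
noncomputable def cfA (α : ℝ) : ℕ → ℤ
  | 0 => ⌊α⌋
  | k + 1 => ⌊1 / (gaussMap^[k] (Int.fract α))⌋

/-- Numerators of the convergents: `p 0 = 1`, `p 1 = a 0`,
`p k = a (k-1) * p (k-1) + p (k-2)`. -/
noncomputable def cfP (α : ℝ) : ℕ → ℤ
  | 0 => 1
  | 1 => cfA α 0
  | k + 2 => cfA α (k + 1) * cfP α (k + 1) + cfP α k

/-- Denominators of the convergents: `q 0 = 0`, `q 1 = 1`,
`q k = a (k-1) * q (k-1) + q (k-2)`. -/
noncomputable def cfQ (α : ℝ) : ℕ → ℤ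
  | 0 => 0
  | 1 => 1
  | k + 2 => cfA α (k + 1) * cfQ α (k + 1) + cfQ α k

/-- `ζ k = |q k * α - p k|`. -/
noncomputable def cfZeta (α : ℝ) (k : ℕ) : ℝ := |(cfQ α k : ℝ) * α - (cfP α k : ℝ)|

/-- `ε k = |α - p k / q k|`. -/
noncomputable def cfEps (α : ℝ) (k : ℕ) : ℝ := |α - (cfP α k : ℝ) / (cfQ α k : ℝ)|

/-!
If the series converged, its terms would tend to `0`, so a pair of consecutive partial quotients
`(a_{2i+1}, a_{2i+2}) = (1, 1)` could occur only finitely often; we show that almost every `α` has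
infinitely many such pairs.

The inverse branches of `G²` are Möbius maps contracting by a factor `4` whose derivatives have
log-Lipschitz constant `2`, so the transfer operator of `G²` preserves the densities `h` with
`h u ≤ exp (3 |u - v|) h v`. Such a density puts at least `1/126` of its mass on `(1/2, 2/3)`, the
image of the branch with digits `(1, 1)`; discarding that branch therefore multiplies the mass by
`125/126`, and the set where none of the first `m` pairs is `(1, 1)` has measure at most
`(125/126)^m`. Finally, the set where no pair from the `N`-th on is `(1, 1)` is obtained from the
case `N = 0` by pulling back `N` times along `G²`, which preserves null sets.
-/

open MeasureTheory Set Filter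
open scoped ENNReal

lemma measurable_gaussMap : Measurable gaussMap :=
  measurable_fract.comp (measurable_const.div measurable_id)

lemma measurable_cfA (n : ℕ) : Measurable fun x => cfA x n := by
  cases n with
  | zero => exact Int.measurable_floor
  | succ k =>
    exact Int.measurable_floor.comp
      (measurable_const.div ((measurable_gaussMap.iterate k).comp measurable_fract))

lemma Irrational.gaussMap {x : ℝ} (hx : Irrational x) : Irrational (gaussMap x) := by
  rw [_root_.gaussMap, Int.fract, one_div]
  exact hx.inv.sub_intCast _

lemma Irrational.gaussMap_mem_Ioo {x : ℝ} (hx : Irrational x) : _root_.gaussMap x ∈ Ioo 0 1 :=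
  ⟨(Int.fract_nonneg _).lt_of_ne fun h => hx.gaussMap ⟨0, by rw [Rat.cast_zero, h]; rfl⟩,
    Int.fract_lt_one _⟩

lemma one_div_floor_add_gaussMap (x : ℝ) : 1 / (⌊1 / x⌋ + gaussMap x) = x := by
  rw [gaussMap, Int.floor_add_fract, one_div_one_div]

lemma fract_gaussMap_iterate_fract (x : ℝ) (j : ℕ) :
    Int.fract (gaussMap^[j] (Int.fract x)) = gaussMap^[j] (Int.fract x) := by
  cases j with
  | zero => exact Int.fract_fract x
  | succ j => rw [Function.iterate_succ_apply', gaussMap, Int.fract_fract]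

lemma cfA_add_add_one (x : ℝ) (j k : ℕ) :
    cfA x (j + k + 1) = cfA (gaussMap^[j] (Int.fract x)) (k + 1) := by
  rw [cfA, cfA, fract_gaussMap_iterate_fract, ← Function.iterate_add_apply, add_comm k]

lemma exists_floor_one_div_eq {x : ℝ} (hx : x ∈ Ioo 0 1) : ∃ a : ℕ, ⌊1 / x⌋ = a + 1 := by
  have h1 : 1 ≤ ⌊1 / x⌋ := Int.le_floor.mpr (by simpa using one_le_one_div hx.1 hx.2.le)
  obtain ⟨a, ha⟩ := Int.eq_ofNat_of_zero_le (sub_nonneg.mpr h1)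
  exact ⟨a, by omega⟩

lemma floor_natCast_add_one_add {n : ℕ} {y : ℝ} (hy : y ∈ Ico 0 1) :
    ⌊(n : ℝ) + 1 + y⌋ = n + 1 := by
  rw [Int.floor_eq_iff]
  push_cast
  constructor <;> linarith [hy.1, hy.2]

lemma fract_natCast_add_one_add {n : ℕ} {y : ℝ} (hy : y ∈ Ico 0 1) :
    Int.fract ((n : ℝ) + 1 + y) = y := by
  rw [show (n : ℝ) + 1 + y = ((n + 1 : ℕ) : ℝ) + y by push_cast; ring,
    Int.fract_natCast_add, Int.fract_eq_self.mpr hy]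

def gaussBranchDen (a b : ℕ) (y : ℝ) : ℝ := ((a : ℝ) + 1) * ((b : ℝ) + 1 + y) + 1

/-- The inverse branch of `gaussMap^[2]` on which the first two partial quotients are `a + 1` and
`b + 1`, i.e. `y ↦ 1 / (a + 1 + 1 / (b + 1 + y))`. -/
noncomputable def gaussBranch (a b : ℕ) (y : ℝ) : ℝ := ((b : ℝ) + 1 + y) / gaussBranchDen a b y

section gaussBranch

variable {a b : ℕ} {y u v : ℝ}

lemma two_le_gaussBranchDen (hy : 0 ≤ y) : 2 ≤ gaussBranchDen a b y := by
  have : (0 : ℝ) ≤ a := a.cast_nonneg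
  have : (0 : ℝ) ≤ b := b.cast_nonneg
  unfold gaussBranchDen
  nlinarith

lemma gaussBranchDen_pos (hy : 0 ≤ y) : 0 < gaussBranchDen a b y :=
  zero_lt_two.trans_le (two_le_gaussBranchDen hy)

lemma gaussBranchDen_le (hu : 0 ≤ u) :
    gaussBranchDen a b v ≤ (1 + |u - v|) * gaussBranchDen a b u := by
  have hslope : (a : ℝ) + 1 ≤ gaussBranchDen a b u := by
    have : (0 : ℝ) ≤ b := b.cast_nonneg
    unfold gaussBranchDen
    nlinarith
  have hvu : v - u ≤ |u - v| := abs_sub_comm u v ▸ le_abs_self _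
  have hdiff : gaussBranchDen a b v = gaussBranchDen a b u + ((a : ℝ) + 1) * (v - u) := by
    unfold gaussBranchDen
    ring
  nlinarith [abs_nonneg (u - v), a.cast_nonneg (α := ℝ)]

lemma gaussBranch_sub (hu : 0 ≤ u) (hv : 0 ≤ v) :
    gaussBranch a b u - gaussBranch a b v
      = (u - v) / (gaussBranchDen a b u * gaussBranchDen a b v) := by
  have := gaussBranchDen_pos (a := a) (b := b) hu
  have := gaussBranchDen_pos (a := a) (b := b) hv
  unfold gaussBranch gaussBranchDen at *
  field_simp
  ring

lemma strictMonoOn_gaussBranch : StrictMonoOn (gaussBranch a b) (Ici 0) := by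
  intro u hu v hv huv
  have := gaussBranchDen_pos (a := a) (b := b) hu
  have := gaussBranchDen_pos (a := a) (b := b) hv
  rw [← sub_pos, gaussBranch_sub hv hu]
  exact div_pos (sub_pos.mpr huv) (by positivity)

lemma abs_gaussBranch_sub_le (hu : 0 ≤ u) (hv : 0 ≤ v) :
    |gaussBranch a b u - gaussBranch a b v| ≤ |u - v| / 4 := by
  have := two_le_gaussBranchDen (a := a) (b := b) hu
  have := two_le_gaussBranchDen (a := a) (b := b) hv
  rw [gaussBranch_sub hu hv, abs_div, abs_of_pos (by positivity :
    0 < gaussBranchDen a b u * gaussBranchDen a b v)]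
  exact div_le_div_of_nonneg_left (abs_nonneg _) (by norm_num) (by nlinarith)

lemma hasDerivAt_gaussBranch (hy : 0 ≤ y) :
    HasDerivAt (gaussBranch a b) (1 / gaussBranchDen a b y ^ 2) y := by
  have hden := gaussBranchDen_pos (a := a) (b := b) hy
  have hnum : HasDerivAt (fun z => (b : ℝ) + 1 + z) 1 y := (hasDerivAt_id y).const_add _
  refine (hnum.div ((hnum.const_mul ((a : ℝ) + 1)).add_const 1) hden.ne').congr_deriv ?_
  unfold gaussBranchDen
  field_simp
  ring

lemma continuousOn_gaussBranch : ContinuousOn (gaussBranch a b) (Ici 0) :=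
  fun _ hy => (hasDerivAt_gaussBranch hy).continuousAt.continuousWithinAt

@[fun_prop]
lemma measurable_gaussBranchDen : Measurable (gaussBranchDen a b) := by
  unfold gaussBranchDen
  fun_prop

@[fun_prop]
lemma measurable_gaussBranch : Measurable (gaussBranch a b) := by
  unfold gaussBranch
  fun_prop

lemma one_div_gaussBranch (hy : 0 ≤ y) :
    1 / gaussBranch a b y = (a : ℝ) + 1 + 1 / ((b : ℝ) + 1 + y) := by
  have := gaussBranchDen_pos (a := a) (b := b) hy
  have : 0 < (b : ℝ) + 1 + y := by positivity
  rw [gaussBranch, one_div_div, gaussBranchDen]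
  field_simp

lemma gaussBranch_mem_Ioo (hy : 0 ≤ y) : gaussBranch a b y ∈ Ioo 0 1 := by
  have hden := gaussBranchDen_pos (a := a) (b := b) hy
  have : (0 : ℝ) ≤ b := b.cast_nonneg
  refine ⟨div_pos (by positivity) hden, (div_lt_one hden).mpr ?_⟩
  unfold gaussBranchDen
  nlinarith [a.cast_nonneg (α := ℝ)]

lemma Irrational.gaussBranch (hy0 : 0 ≤ y) (hy : Irrational y) :
    Irrational (_root_.gaussBranch a b y) := by
  rw [← one_div_one_div (_root_.gaussBranch a b y), one_div_gaussBranch hy0, one_div, one_div]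
  have hb := hy.natCast_add (b + 1)
  rw [Nat.cast_succ] at hb
  have hab := hb.inv.natCast_add (a + 1)
  rw [Nat.cast_succ] at hab
  exact hab.inv

lemma one_div_natCast_add_one_add_mem_Ico (hy : y ∈ Ioo 0 1) :
    1 / ((b : ℝ) + 1 + y) ∈ Ico 0 1 := by
  have : 1 < (b : ℝ) + 1 + y := by linarith [b.cast_nonneg (α := ℝ), hy.1]
  exact ⟨by positivity, (div_lt_one (by linarith)).mpr this⟩

lemma cfA_gaussBranch_one (hy : y ∈ Ioo 0 1) : cfA (gaussBranch a b y) 1 = a + 1 := by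
  rw [cfA, Function.iterate_zero_apply, Int.fract_eq_self.mpr (Ioo_subset_Ico_self
    (gaussBranch_mem_Ioo hy.1.le)), one_div_gaussBranch hy.1.le,
    floor_natCast_add_one_add (one_div_natCast_add_one_add_mem_Ico hy)]

lemma gaussMap_gaussBranch (hy : y ∈ Ioo 0 1) :
    gaussMap (gaussBranch a b y) = 1 / ((b : ℝ) + 1 + y) := by
  rw [gaussMap, one_div_gaussBranch hy.1.le,
    fract_natCast_add_one_add (one_div_natCast_add_one_add_mem_Ico hy)]

lemma cfA_gaussBranch_two (hy : y ∈ Ioo 0 1) : cfA (gaussBranch a b y) 2 = b + 1 := by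
  rw [cfA, Function.iterate_one, Int.fract_eq_self.mpr (Ioo_subset_Ico_self
    (gaussBranch_mem_Ioo hy.1.le)), gaussMap_gaussBranch hy, one_div_one_div,
    floor_natCast_add_one_add (Ioo_subset_Ico_self hy)]

lemma gaussMap_iterate_two_gaussBranch (hy : y ∈ Ioo 0 1) :
    gaussMap^[2] (gaussBranch a b y) = y := by
  rw [Function.iterate_succ_apply', Function.iterate_one, gaussMap_gaussBranch hy, gaussMap,
    one_div_one_div, fract_natCast_add_one_add (Ioo_subset_Ico_self hy)]

lemma cfA_gaussBranch_add_three (hy : y ∈ Ioo 0 1) (k : ℕ) :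
    cfA (gaussBranch a b y) (k + 3) = cfA y (k + 1) := by
  rw [show k + 3 = 2 + k + 1 by ring, cfA_add_add_one, Int.fract_eq_self.mpr
    (Ioo_subset_Ico_self (gaussBranch_mem_Ioo hy.1.le)), gaussMap_iterate_two_gaussBranch hy]

end gaussBranch

def unitIrrationals : Set ℝ := Ioo 0 1 ∩ {x | Irrational x}

lemma measurableSet_unitIrrationals : MeasurableSet unitIrrationals :=
  measurableSet_Ioo.inter (countable_range ((↑) : ℚ → ℝ)).measurableSet.compl

lemma ae_mem_unitIrrationals : ∀ᵐ x ∂volume.restrict (Ioo (0 : ℝ) 1), x ∈ unitIrrationals := by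
  have hrat : ∀ᵐ x ∂(volume : Measure ℝ), Irrational x :=
    measure_eq_zero_iff_ae_notMem.mp ((countable_range ((↑) : ℚ → ℝ)).measure_zero _)
  filter_upwards [ae_restrict_mem measurableSet_Ioo, ae_restrict_of_ae hrat] with x hx hirr
  exact ⟨hx, hirr⟩

lemma gaussBranch_mem_unitIrrationals {a b : ℕ} {y : ℝ} (hy : y ∈ unitIrrationals) :
    gaussBranch a b y ∈ unitIrrationals :=
  ⟨gaussBranch_mem_Ioo hy.1.1.le, hy.2.gaussBranch hy.1.1.le⟩

lemma exists_gaussBranch_eq {x : ℝ} (hx : x ∈ unitIrrationals) :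
    ∃ a b : ℕ, ∃ y ∈ unitIrrationals, gaussBranch a b y = x := by
  obtain ⟨a, ha⟩ := exists_floor_one_div_eq hx.1
  obtain ⟨b, hb⟩ := exists_floor_one_div_eq hx.2.gaussMap_mem_Ioo
  refine ⟨a, b, gaussMap (gaussMap x),
    ⟨hx.2.gaussMap.gaussMap_mem_Ioo, hx.2.gaussMap.gaussMap⟩, ?_⟩
  have hG2 : 0 ≤ gaussMap (gaussMap x) := Int.fract_nonneg _
  rw [← one_div_one_div (gaussBranch a b _), one_div_gaussBranch hG2]
  have hcast : ∀ n : ℕ, ((n : ℤ) + 1 : ℤ) = (n : ℝ) + 1 := fun n => by push_cast; ring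
  rw [← hcast, ← hcast, ← hb, ← ha, one_div_floor_add_gaussMap, one_div_floor_add_gaussMap]

def OnesPairAt (x : ℝ) (i : ℕ) : Prop := cfA x (2 * i + 1) = 1 ∧ cfA x (2 * i + 2) = 1

lemma measurableSet_onesPairAt (i : ℕ) : MeasurableSet {x | OnesPairAt x i} :=
  (measurable_cfA _ (measurableSet_singleton 1)).inter
    (measurable_cfA _ (measurableSet_singleton 1))

lemma onesPairAt_gaussBranch_zero {a b : ℕ} {y : ℝ} (hy : y ∈ Ioo 0 1) :
    OnesPairAt (gaussBranch a b y) 0 ↔ (a, b) = (0, 0) := by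
  simp only [OnesPairAt, cfA_gaussBranch_one hy, cfA_gaussBranch_two hy, Prod.mk.injEq]
  omega

lemma onesPairAt_gaussBranch_succ {a b : ℕ} {y : ℝ} (hy : y ∈ Ioo 0 1) (i : ℕ) :
    OnesPairAt (gaussBranch a b y) (i + 1) ↔ OnesPairAt y i := by
  rw [OnesPairAt, OnesPairAt, show 2 * (i + 1) + 1 = 2 * i + 3 by ring,
    show 2 * (i + 1) + 2 = (2 * i + 1) + 3 by ring, cfA_gaussBranch_add_three hy,
    cfA_gaussBranch_add_three hy]

def noOnesPairBefore (m : ℕ) : Set ℝ := {x ∈ unitIrrationals | ∀ i < m, ¬OnesPairAt x i}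

def noOnesPairFrom (N : ℕ) : Set ℝ := {x ∈ unitIrrationals | ∀ i ≥ N, ¬OnesPairAt x i}

lemma measurableSet_noOnesPairBefore (m : ℕ) : MeasurableSet (noOnesPairBefore m) := by
  simp only [noOnesPairBefore, ofPred_and, ofPred_forall]
  exact measurableSet_unitIrrationals.inter
    (.iInter fun i => .iInter fun _ => (measurableSet_onesPairAt i).compl)

lemma measurableSet_noOnesPairFrom (N : ℕ) : MeasurableSet (noOnesPairFrom N) := by
  simp only [noOnesPairFrom, ofPred_and, ofPred_forall]
  exact measurableSet_unitIrrationals.inter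
    (.iInter fun i => .iInter fun _ => (measurableSet_onesPairAt i).compl)

lemma noOnesPairBefore_succ (m : ℕ) :
    noOnesPairBefore (m + 1)
      = ⋃ p ∈ ({(0, 0)}ᶜ : Set (ℕ × ℕ)), gaussBranch p.1 p.2 '' noOnesPairBefore m := by
  ext x
  simp only [noOnesPairBefore, mem_iUnion, mem_image, mem_ofPred_eq, mem_compl_singleton_iff,
    exists_prop, Prod.exists]
  constructor
  · rintro ⟨hx, hpairs⟩
    obtain ⟨a, b, y, hy, rfl⟩ := exists_gaussBranch_eq hx
    refine ⟨a, b, fun hab => hpairs 0 m.succ_pos ((onesPairAt_gaussBranch_zero hy.1).mpr hab),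
      y, ⟨hy, fun i hi => ?_⟩, rfl⟩
    rw [← onesPairAt_gaussBranch_succ hy.1]
    exact hpairs (i + 1) (by omega)
  · rintro ⟨a, b, hab, y, ⟨hy, hpairs⟩, rfl⟩
    refine ⟨gaussBranch_mem_unitIrrationals hy, fun i hi => ?_⟩
    cases i with
    | zero => rwa [onesPairAt_gaussBranch_zero hy.1]
    | succ i =>
      rw [onesPairAt_gaussBranch_succ hy.1]
      exact hpairs i (by omega)

lemma noOnesPairFrom_succ (N : ℕ) :
    noOnesPairFrom (N + 1)
      = ⋃ p ∈ (univ : Set (ℕ × ℕ)), gaussBranch p.1 p.2 '' noOnesPairFrom N := by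
  ext x
  simp only [noOnesPairFrom, mem_iUnion, mem_image, mem_ofPred_eq, mem_univ, exists_const,
    Prod.exists]
  constructor
  · rintro ⟨hx, hpairs⟩
    obtain ⟨a, b, y, hy, rfl⟩ := exists_gaussBranch_eq hx
    refine ⟨a, b, y, ⟨hy, fun i hi => ?_⟩, rfl⟩
    rw [← onesPairAt_gaussBranch_succ hy.1]
    exact hpairs (i + 1) (by omega)
  · rintro ⟨a, b, y, ⟨hy, hpairs⟩, rfl⟩
    refine ⟨gaussBranch_mem_unitIrrationals hy, fun i hi => ?_⟩
    obtain ⟨j, rfl⟩ : ∃ j, i = j + 1 := ⟨i - 1, by omega⟩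
    rw [onesPairAt_gaussBranch_succ hy.1]
    exact hpairs j (by omega)

section transferOp

variable {a b : ℕ} {T : Set ℝ}

lemma lintegral_image_gaussBranch (hT : MeasurableSet T) (hT0 : T ⊆ Ici 0) (h : ℝ → ℝ≥0∞) :
    ∫⁻ x in gaussBranch a b '' T, h x
      = ∫⁻ y in T, ENNReal.ofReal (1 / gaussBranchDen a b y ^ 2) * h (gaussBranch a b y) := by
  rw [lintegral_image_eq_lintegral_abs_deriv_mul hT
    (fun y hy => (hasDerivAt_gaussBranch (hT0 hy)).hasDerivWithinAt)
    (strictMonoOn_gaussBranch.injOn.mono hT0)]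
  refine setLIntegral_congr_fun hT fun y hy => ?_
  have := gaussBranchDen_pos (a := a) (b := b) (hT0 hy)
  rw [abs_of_pos (by positivity)]

lemma measurableSet_image_gaussBranch (hT : MeasurableSet T) (hT0 : T ⊆ Ici 0) :
    MeasurableSet (gaussBranch a b '' T) :=
  hT.image_of_continuousOn_injOn (continuousOn_gaussBranch.mono hT0)
    (strictMonoOn_gaussBranch.injOn.mono hT0)

lemma disjoint_image_gaussBranch (hT : T ⊆ Ioo 0 1) {p q : ℕ × ℕ} (hpq : p ≠ q) :
    Disjoint (gaussBranch p.1 p.2 '' T) (gaussBranch q.1 q.2 '' T) := by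
  rw [disjoint_left]
  rintro _ ⟨y, hy, rfl⟩ ⟨z, hz, hzy⟩
  have h1 := cfA_gaussBranch_one (a := p.1) (b := p.2) (hT hy)
  have h2 := cfA_gaussBranch_two (a := p.1) (b := p.2) (hT hy)
  rw [← hzy, cfA_gaussBranch_one (hT hz)] at h1
  rw [← hzy, cfA_gaussBranch_two (hT hz)] at h2
  exact hpq (Prod.ext (by omega) (by omega))

/-- The transfer operator of `gaussMap^[2]` over the branches in `P`; the weight
`1 / gaussBranchDen ^ 2` is the derivative of the branch. -/
noncomputable def transferOp (P : Set (ℕ × ℕ)) (h : ℝ → ℝ≥0∞) (y : ℝ) : ℝ≥0∞ :=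
  ∑' p : P, ENNReal.ofReal (1 / gaussBranchDen p.1.1 p.1.2 y ^ 2) * h (gaussBranch p.1.1 p.1.2 y)

lemma measurable_transferOp (P : Set (ℕ × ℕ)) {h : ℝ → ℝ≥0∞} (hh : Measurable h) :
    Measurable (transferOp P h) :=
  Measurable.tsum fun _ => by fun_prop

lemma lintegral_biUnion_image_gaussBranch (P : Set (ℕ × ℕ)) (hT : MeasurableSet T)
    (hT01 : T ⊆ Ioo 0 1) {h : ℝ → ℝ≥0∞} (hh : Measurable h) :
    ∫⁻ x in ⋃ p ∈ P, gaussBranch p.1 p.2 '' T, h x = ∫⁻ y in T, transferOp P h y := by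
  have hT0 : T ⊆ Ici 0 := fun y hy => (hT01 hy).1.le
  rw [lintegral_biUnion₀ P.to_countable
    (fun _ _ => (measurableSet_image_gaussBranch hT hT0).nullMeasurableSet)
    (fun _ _ _ _ hpq => (disjoint_image_gaussBranch hT01 hpq).aedisjoint),
    tsum_congr fun p => lintegral_image_gaussBranch hT hT0 h,
    ← lintegral_tsum fun p => by fun_prop]
  rfl

end transferOp

lemma ENNReal.le_ofReal_one_sub_div_mul_of_add_eq {A B C : ℝ≥0∞} {c K : ℝ} (hc : 0 ≤ c)
    (hcK : c < K) (hsum : A + B = C) (hB : C * ENNReal.ofReal c ≤ ENNReal.ofReal K * B) :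
    A ≤ ENNReal.ofReal (1 - c / K) * C := by
  have hK : 0 < K := hc.trans_lt hcK
  have hθ : 0 < 1 - c / K := by rw [sub_pos, div_lt_one hK]; exact hcK
  rcases eq_or_ne C ⊤ with rfl | hC
  · rw [ENNReal.mul_top (by simpa using hθ)]
    exact le_top
  have hA : A ≠ ⊤ := ne_top_of_le_ne_top hC (hsum ▸ le_self_add)
  have hB' : B ≠ ⊤ := ne_top_of_le_ne_top hC (hsum ▸ le_add_self)
  have hsum' : A.toReal + B.toReal = C.toReal := by rw [← ENNReal.toReal_add hA hB', hsum]
  have hB'' : C.toReal * c ≤ K * B.toReal := by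
    simpa [ENNReal.toReal_mul, hc, hK.le] using
      ENNReal.toReal_mono (ENNReal.mul_ne_top ENNReal.ofReal_ne_top hB') hB
  rw [← ENNReal.toReal_le_toReal hA (ENNReal.mul_ne_top ENNReal.ofReal_ne_top hC),
    ENNReal.toReal_mul, ENNReal.toReal_ofReal hθ.le, sub_mul, one_mul, le_sub_iff_add_le]
  have : c / K * C.toReal ≤ B.toReal := by
    rw [div_mul_eq_mul_div, div_le_iff₀ hK]
    linarith
  linarith

/-- The constant `3` makes this class invariant under `transferOp`: the weights contribute a factor
`exp (2 |u - v|)` and, the branches being `1/4`-contractions, `h ∘ gaussBranch` a factor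
`exp (3 |u - v| / 4)`. -/
def LogLipschitzOnUnit (h : ℝ → ℝ≥0∞) : Prop :=
  ∀ u ∈ Ioo (0 : ℝ) 1, ∀ v ∈ Ioo (0 : ℝ) 1, h u ≤ ENNReal.ofReal (Real.exp (3 * |u - v|)) * h v

lemma logLipschitzOnUnit_const (c : ℝ≥0∞) : LogLipschitzOnUnit fun _ => c := fun u _ v _ =>
  le_mul_of_one_le_left' (ENNReal.one_le_ofReal.mpr (Real.one_le_exp (by positivity)))

lemma one_div_gaussBranchDen_sq_le {a b : ℕ} {u v : ℝ} (hu : 0 ≤ u) (hv : 0 ≤ v) :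
    1 / gaussBranchDen a b u ^ 2 ≤ Real.exp (2 * |u - v|) * (1 / gaussBranchDen a b v ^ 2) := by
  have hu' := gaussBranchDen_pos (a := a) (b := b) hu
  have hv' := gaussBranchDen_pos (a := a) (b := b) hv
  have hle : gaussBranchDen a b v ≤ Real.exp |u - v| * gaussBranchDen a b u :=
    (gaussBranchDen_le hu).trans (mul_le_mul_of_nonneg_right
      (by linarith [Real.add_one_le_exp |u - v|]) hu'.le)
  rw [mul_one_div, div_le_div_iff₀ (by positivity) (by positivity), one_mul,
    show 2 * |u - v| = (2 : ℕ) * |u - v| by norm_num, Real.exp_nat_mul, ← mul_pow]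
  exact pow_le_pow_left₀ hv'.le hle 2

lemma LogLipschitzOnUnit.transferOp {h : ℝ → ℝ≥0∞} (hh : LogLipschitzOnUnit h)
    (P : Set (ℕ × ℕ)) : LogLipschitzOnUnit (transferOp P h) := by
  intro u hu v hv
  rw [_root_.transferOp, _root_.transferOp, ← ENNReal.tsum_mul_left]
  refine ENNReal.tsum_le_tsum fun ⟨⟨a, b⟩, _⟩ => ?_
  have hd : 0 ≤ |u - v| := abs_nonneg _
  have hweight : ENNReal.ofReal (1 / gaussBranchDen a b u ^ 2)
      ≤ ENNReal.ofReal (Real.exp (2 * |u - v|))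
        * ENNReal.ofReal (1 / gaussBranchDen a b v ^ 2) := by
    rw [← ENNReal.ofReal_mul (by positivity)]
    exact ENNReal.ofReal_le_ofReal (one_div_gaussBranchDen_sq_le hu.1.le hv.1.le)
  have hcomp : h (gaussBranch a b u)
      ≤ ENNReal.ofReal (Real.exp (3 * (|u - v| / 4))) * h (gaussBranch a b v) := by
    refine (hh (gaussBranch a b u) (gaussBranch_mem_Ioo hu.1.le) (gaussBranch a b v)
      (gaussBranch_mem_Ioo hv.1.le)).trans ?_
    gcongr
    exact abs_gaussBranch_sub_le hu.1.le hv.1.le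
  calc _ ≤ ENNReal.ofReal (Real.exp (2 * |u - v|)) * ENNReal.ofReal (1 / gaussBranchDen a b v ^ 2)
        * (ENNReal.ofReal (Real.exp (3 * (|u - v| / 4))) * h (gaussBranch a b v)) :=
      mul_le_mul' hweight hcomp
    _ = ENNReal.ofReal (Real.exp (2 * |u - v| + 3 * (|u - v| / 4)))
        * (ENNReal.ofReal (1 / gaussBranchDen a b v ^ 2) * h (gaussBranch a b v)) := by
      rw [Real.exp_add, ENNReal.ofReal_mul (by positivity)]
      ring
    _ ≤ _ := by
      gcongr
      linarith

lemma LogLipschitzOnUnit.lintegral_le {h : ℝ → ℝ≥0∞} (hh : LogLipschitzOnUnit h) {v : ℝ}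
    (hv : v ∈ Ioo 0 1) : ∫⁻ x in Ioo 0 1, h x ≤ 21 * h v := by
  have hexp : Real.exp 3 < 21 := by
    have := Real.exp_one_lt_d9
    rw [show (3 : ℝ) = (3 : ℕ) * 1 by norm_num, Real.exp_nat_mul]
    calc Real.exp 1 ^ 3 < 2.7182818286 ^ 3 := by gcongr
      _ < 21 := by norm_num
  calc ∫⁻ x in Ioo 0 1, h x ≤ ∫⁻ _ in Ioo (0 : ℝ) 1, 21 * h v := by
        refine setLIntegral_mono' measurableSet_Ioo fun u hu => (hh u hu v hv).trans ?_
        gcongr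
        refine ENNReal.ofReal_le_of_le_toReal ?_
        have : |u - v| ≤ 1 :=
          abs_sub_le_iff.mpr ⟨by linarith [hu.2, hv.1], by linarith [hu.1, hv.2]⟩
        calc Real.exp (3 * |u - v|) ≤ Real.exp 3 := by gcongr; linarith
          _ ≤ (21 : ℝ≥0∞).toReal := by norm_num; linarith
    _ = 21 * h v := by simp [Real.volume_Ioo]

/-- The image of the branch `(0, 0)`, i.e. the cylinder `a₁ = a₂ = 1`, is `(1/2, 2/3)`. -/
lemma gaussBranch_notMem_Ioo {a b : ℕ} {y : ℝ} (hab : (a, b) ≠ (0, 0)) (hy : 0 ≤ y) :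
    gaussBranch a b y ∉ Ioo (1 / 2 : ℝ) (2 / 3) := by
  have hden := gaussBranchDen_pos (a := a) (b := b) hy
  rintro ⟨hlo, hhi⟩
  rw [gaussBranch, lt_div_iff₀ hden, div_lt_iff₀ hden, gaussBranchDen] at *
  rcases Nat.eq_zero_or_pos a with rfl | ha
  · have hb : (1 : ℝ) ≤ b := Nat.one_le_cast.mpr (Nat.pos_of_ne_zero fun hb => hab (by rw [hb]))
    push_cast at hhi
    linarith
  · have ha : (1 : ℝ) ≤ a := by exact_mod_cast ha
    nlinarith [b.cast_nonneg (α := ℝ)]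

lemma lintegral_transferOp_le {P : Set (ℕ × ℕ)} (hP : (0, 0) ∉ P) {h : ℝ → ℝ≥0∞}
    (hm : Measurable h) (hh : LogLipschitzOnUnit h) :
    ∫⁻ y in Ioo 0 1, transferOp P h y ≤ ENNReal.ofReal (125 / 126) * ∫⁻ x in Ioo 0 1, h x := by
  have hJ : Ioo (1 / 2 : ℝ) (2 / 3) ⊆ Ioo 0 1 := Ioo_subset_Ioo (by norm_num) (by norm_num)
  have himage : ⋃ p ∈ P, gaussBranch p.1 p.2 '' Ioo 0 1 ⊆ Ioo 0 1 \ Ioo (1 / 2) (2 / 3) := by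
    refine iUnion₂_subset fun p hp => ?_
    rintro _ ⟨y, hy, rfl⟩
    exact ⟨gaussBranch_mem_Ioo hy.1.le, gaussBranch_notMem_Ioo (ne_of_mem_of_not_mem hp hP) hy.1.le⟩
  have hsplit : (∫⁻ x in Ioo 0 1 \ Ioo (1 / 2) (2 / 3), h x) + ∫⁻ x in Ioo (1 / 2) (2 / 3), h x
      = ∫⁻ x in Ioo 0 1, h x := by
    rw [← lintegral_union (measurableSet_Ioo : MeasurableSet (Ioo (1 / 2 : ℝ) (2 / 3)))
      disjoint_sdiff_left, sdiff_union_of_subset hJ]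
  have hJ_mass : (∫⁻ x in Ioo 0 1, h x) * ENNReal.ofReal (2 / 3 - 1 / 2)
      ≤ ENNReal.ofReal 21 * ∫⁻ x in Ioo (1 / 2) (2 / 3), h x := by
    have := setLIntegral_mono' (μ := volume) measurableSet_Ioo fun z hz => hh.lintegral_le (hJ hz)
    rwa [setLIntegral_const, Real.volume_Ioo, lintegral_const_mul _ hm,
      ← ENNReal.ofReal_ofNat] at this
  rw [← lintegral_biUnion_image_gaussBranch P measurableSet_Ioo subset_rfl hm]
  have key := ENNReal.le_ofReal_one_sub_div_mul_of_add_eq (by norm_num) (by norm_num) hsplit hJ_mass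
  norm_num at key
  exact (lintegral_mono_set himage).trans key

lemma lintegral_noOnesPairBefore_le (m : ℕ) {h : ℝ → ℝ≥0∞} (hm : Measurable h)
    (hh : LogLipschitzOnUnit h) :
    ∫⁻ x in noOnesPairBefore m, h x ≤ ENNReal.ofReal (125 / 126) ^ m * ∫⁻ x in Ioo 0 1, h x := by
  induction m generalizing h with
  | zero => simpa using lintegral_mono_set fun x (hx : x ∈ noOnesPairBefore 0) => hx.1.1
  | succ m ih =>
    rw [noOnesPairBefore_succ, lintegral_biUnion_image_gaussBranch _
      (measurableSet_noOnesPairBefore m) (fun x hx => hx.1.1) hm, pow_succ, mul_assoc]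
    refine (ih (measurable_transferOp _ hm) (hh.transferOp _)).trans ?_
    gcongr
    exact lintegral_transferOp_le (by simp) hm hh

lemma volume_noOnesPairFrom_zero : volume (noOnesPairFrom 0) = 0 := by
  refine le_antisymm (ge_of_tendsto' (ENNReal.tendsto_pow_atTop_nhds_zero_of_lt_one
    (ENNReal.ofReal_lt_one.mpr (by norm_num : (125 / 126 : ℝ) < 1))) fun m => ?_) zero_le
  calc volume (noOnesPairFrom 0) ≤ volume (noOnesPairBefore m) :=
        measure_mono fun x hx => ⟨hx.1, fun i _ => hx.2 i i.zero_le⟩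
    _ ≤ ENNReal.ofReal (125 / 126) ^ m * ∫⁻ _ in Ioo (0 : ℝ) 1, 1 := by
        simpa using lintegral_noOnesPairBefore_le m measurable_const (logLipschitzOnUnit_const 1)
    _ = ENNReal.ofReal (125 / 126) ^ m := by simp [Real.volume_Ioo]

lemma volume_noOnesPairFrom (N : ℕ) : volume (noOnesPairFrom N) = 0 := by
  induction N with
  | zero => exact volume_noOnesPairFrom_zero
  | succ N ih =>
    rw [← setLIntegral_one, noOnesPairFrom_succ, lintegral_biUnion_image_gaussBranch _
      (measurableSet_noOnesPairFrom N) (fun x hx => hx.1.1) measurable_const]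
    exact setLIntegral_measure_zero _ _ ih

lemma ae_frequently_onesPairAt :
    ∀ᵐ x ∂volume.restrict (Ioo (0 : ℝ) 1), ∃ᶠ i in atTop, OnesPairAt x i := by
  have hnull : ∀ᵐ x ∂volume.restrict (Ioo (0 : ℝ) 1), ∀ N, x ∉ noOnesPairFrom N :=
    ae_restrict_of_ae (ae_all_iff.mpr fun N =>
      measure_eq_zero_iff_ae_notMem.mp (volume_noOnesPairFrom N))
  filter_upwards [ae_mem_unitIrrationals, hnull] with x hx hN
  refine frequently_atTop.mpr fun N => ?_
  by_contra! h
  exact hN N ⟨hx, h⟩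

/-- For Lebesgue-a.e. `α ∈ (0,1)`, the series `∑_{k=2}^∞ 1/(a_k a_{k-1})` diverges. -/
theorem ae_divergent :
    ∀ᵐ α ∂(MeasureTheory.volume.restrict (Set.Ioo (0 : ℝ) 1)),
      ¬ Summable (fun k : ℕ =>
        1 / ((cfA α (k + 2) : ℝ) * (cfA α (k + 1) : ℝ))) := by
  filter_upwards [ae_frequently_onesPairAt] with α hα hsum
  have hsmall : ∀ᶠ i in atTop, 1 / ((cfA α (2 * i + 2) : ℝ) * cfA α (2 * i + 1)) < 1 :=
    (hsum.comp_injective (mul_right_injective₀ two_ne_zero)).tendsto_atTop_zero.eventually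
      (gt_mem_nhds one_pos)
  obtain ⟨i, ⟨h1, h2⟩, hlt⟩ := (hα.and_eventually hsmall).exists
  rw [h1, h2] at hlt
  norm_num at hlt
end

section
/- Let ℓ ≥ 1 and let (z_i)_{i≥ℓ} be integers with |z_i| ≤ a_i − 1 for all i ≥ ℓ. Then the series ∑_{i=ℓ}^∞ z_i ζ_i converges absolutely and |∑_{i=ℓ}^∞ z_i ζ_i| ≤ a_ℓ ζ_ℓ − ∑_{i=ℓ+2}^∞ ζ_i < ζ_{ℓ−1}, where ζ_j = |q_j α − p_j| and ζ_0 = 1. -/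
open scoped BigOperators

/-!
Write `t k := G^[k] (fract α) ∈ (0, 1)`. Then `a (k + 1) = 1 / t k - t (k + 1)` and
`ζ k = t 0 ⋯ t (k - 1)`, which gives the recurrence `ζ k = a (k + 1) ζ (k + 1) + ζ (k + 2)`.
Telescoping it yields `∑_{i ≥ ℓ} a i ζ i = ζ (ℓ - 1) + ζ ℓ`. Since `|z i| ζ i ≤ a i ζ i - ζ i`,
the series is dominated by `ζ (ℓ - 1) + ζ ℓ - ∑_{i ≥ ℓ} ζ i = a ℓ ζ ℓ - ∑_{i ≥ ℓ + 2} ζ i`,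
which is less than `ζ (ℓ - 1) = a ℓ ζ ℓ + ζ (ℓ + 1)`.
-/

open Finset Filter Topology

section Recurrence

variable {ζ c : ℕ → ℝ}

theorem sum_range_mul_eq_of_recurrence (hrec : ∀ k, ζ k = c (k + 1) * ζ (k + 1) + ζ (k + 2))
    (m N : ℕ) :
    ∑ i ∈ range N, c (m + 1 + i) * ζ (m + 1 + i) =
      ζ m + ζ (m + 1) - ζ (m + N) - ζ (m + N + 1) := by
  induction N with
  | zero => simp
  | succ N ih =>
    rw [sum_range_succ, ih, hrec (m + N)]
    simp only [← add_assoc, add_right_comm m 1 N]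
    ring

variable (hpos : ∀ k, 0 < ζ k) (hrec : ∀ k, ζ k = c (k + 1) * ζ (k + 1) + ζ (k + 2))
include hpos hrec

theorem mul_sub_tsum_lt_of_recurrence (m : ℕ) :
    c (m + 1) * ζ (m + 1) - ∑' i, ζ (m + 1 + 2 + i) < ζ m := by
  have : 0 ≤ ∑' i, ζ (m + 1 + 2 + i) := tsum_nonneg fun _ => (hpos _).le
  linarith [hrec m, hpos (m + 2)]

variable (hc : ∀ k, 0 < k → 1 ≤ c k)
include hc

theorem summable_of_recurrence : Summable ζ := by
  refine (summable_nat_add_iff 1).1 (summable_of_sum_range_le (c := ζ 0 + ζ 1)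
    (fun i => (hpos _).le) fun N => ?_)
  calc ∑ i ∈ range N, ζ (i + 1)
      ≤ ∑ i ∈ range N, c (0 + 1 + i) * ζ (0 + 1 + i) := by
        refine sum_le_sum fun i _ => ?_
        rw [zero_add, add_comm 1 i]
        exact le_mul_of_one_le_left (hpos _).le (hc _ i.succ_pos)
    _ ≤ ζ 0 + ζ 1 := by
        rw [sum_range_mul_eq_of_recurrence hrec]
        linarith [hpos (0 + N), hpos (0 + N + 1)]

theorem hasSum_mul_of_recurrence (m : ℕ) :
    HasSum (fun i => c (m + 1 + i) * ζ (m + 1 + i)) (ζ m + ζ (m + 1)) := by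
  have hnonneg : ∀ i, 0 ≤ c (m + 1 + i) * ζ (m + 1 + i) := fun i =>
    mul_nonneg (zero_le_one.trans (hc _ (by omega))) (hpos _).le
  have hζ : Tendsto (fun N => ζ (m + N)) atTop (𝓝 0) := by
    simpa only [add_comm m] using
      ((summable_nat_add_iff m).2 (summable_of_recurrence hpos hrec hc)).tendsto_atTop_zero
  have hζ' : Tendsto (fun N => ζ (m + N + 1)) atTop (𝓝 0) :=
    (tendsto_add_atTop_iff_nat 1).2 hζ
  rw [hasSum_iff_tendsto_nat_of_nonneg hnonneg]
  simp only [sum_range_mul_eq_of_recurrence hrec]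
  simpa using (tendsto_const_nhds (x := ζ m + ζ (m + 1))).sub hζ |>.sub hζ'

theorem abs_tsum_le_of_recurrence (m : ℕ) (x : ℕ → ℝ) (hx : ∀ i, m < i → |x i| ≤ c i - 1) :
    Summable (fun i => |x (m + 1 + i) * ζ (m + 1 + i)|) ∧
    |∑' i, x (m + 1 + i) * ζ (m + 1 + i)| ≤
      c (m + 1) * ζ (m + 1) - ∑' i, ζ (m + 1 + 2 + i) := by
  have hζ : Summable fun i => ζ (m + 1 + i) := by
    simpa only [add_comm (m + 1)] using
      (summable_nat_add_iff (m + 1)).2 (summable_of_recurrence hpos hrec hc)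
  have hmul := hasSum_mul_of_recurrence hpos hrec hc m
  have hbound : ∀ i, |x (m + 1 + i) * ζ (m + 1 + i)|
      ≤ c (m + 1 + i) * ζ (m + 1 + i) - ζ (m + 1 + i) := fun i => by
    rw [abs_mul, abs_of_pos (hpos _), ← sub_one_mul]
    exact mul_le_mul_of_nonneg_right (hx _ (by omega)) (hpos _).le
  have habs : Summable fun i => |x (m + 1 + i) * ζ (m + 1 + i)| :=
    (hmul.summable.sub hζ).of_nonneg_of_le (fun _ => abs_nonneg _) hbound
  have hsplit : ∑' i, ζ (m + 1 + i) = ζ (m + 1) + ζ (m + 2) + ∑' i, ζ (m + 1 + 2 + i) := by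
    rw [← hζ.sum_add_tsum_nat_add 2, sum_range_succ, sum_range_one]
    exact congrArg₂ _ rfl (tsum_congr fun i => congrArg ζ (by omega))
  refine ⟨habs, ?_⟩
  calc |∑' i, x (m + 1 + i) * ζ (m + 1 + i)|
      ≤ ∑' i, |x (m + 1 + i) * ζ (m + 1 + i)| :=
        norm_tsum_le_tsum_norm (f := fun i => x (m + 1 + i) * ζ (m + 1 + i)) habs
    _ ≤ ∑' i, (c (m + 1 + i) * ζ (m + 1 + i) - ζ (m + 1 + i)) :=
        habs.tsum_le_tsum hbound (hmul.summable.sub hζ)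
    _ = ζ m + ζ (m + 1) - ∑' i, ζ (m + 1 + i) := by
        rw [hmul.summable.tsum_sub hζ, hmul.tsum_eq]
    _ = c (m + 1) * ζ (m + 1) - ∑' i, ζ (m + 1 + 2 + i) := by rw [hsplit, hrec m]; ring

end Recurrence

section ContinuedFraction

variable {α : ℝ}

noncomputable def gaussOrbit (α : ℝ) (k : ℕ) : ℝ := gaussMap^[k] (Int.fract α)

theorem gaussOrbit_succ (α : ℝ) (k : ℕ) :
    gaussOrbit α (k + 1) = Int.fract (1 / gaussOrbit α k) := by
  simp only [gaussOrbit, Function.iterate_succ_apply', gaussMap]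

theorem Irrational.fract {x : ℝ} (hx : Irrational x) : Irrational (Int.fract x) := by
  simpa only [Int.self_sub_floor] using hx.sub_intCast ⌊x⌋

theorem Irrational.fract_pos {x : ℝ} (hx : Irrational x) : 0 < Int.fract x :=
  Int.fract_pos.2 (hx.ne_int _)

theorem Irrational.gaussOrbit (hα : Irrational α) (k : ℕ) : Irrational (gaussOrbit α k) := by
  induction k with
  | zero => exact hα.fract
  | succ k ih => simpa only [gaussOrbit_succ, one_div] using ih.inv.fract

theorem gaussOrbit_pos (hα : Irrational α) (k : ℕ) : 0 < gaussOrbit α k := by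
  cases k with
  | zero => exact hα.fract_pos
  | succ k =>
    rw [gaussOrbit_succ, one_div]
    exact (hα.gaussOrbit k).inv.fract_pos

theorem gaussOrbit_lt_one (α : ℝ) (k : ℕ) : gaussOrbit α k < 1 := by
  cases k with
  | zero => exact Int.fract_lt_one α
  | succ k => rw [gaussOrbit_succ]; exact Int.fract_lt_one _

theorem cfA_succ (α : ℝ) (k : ℕ) :
    (cfA α (k + 1) : ℝ) = 1 / gaussOrbit α k - gaussOrbit α (k + 1) := by
  rw [gaussOrbit_succ, Int.fract, sub_sub_cancel]
  rfl

theorem one_le_cfA_succ (hα : Irrational α) (k : ℕ) : 1 ≤ cfA α (k + 1) :=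
  Int.le_floor.2 <| by
    exact_mod_cast one_le_one_div (gaussOrbit_pos hα k) (gaussOrbit_lt_one α k).le

theorem cfQ_mul_sub_cfP (hα : Irrational α) (k : ℕ) :
    (cfQ α k : ℝ) * α - cfP α k = (-1) ^ (k + 1) * ∏ i ∈ range k, gaussOrbit α i := by
  induction k using Nat.twoStepInduction with
  | zero => simp [cfQ, cfP]
  | one =>
    simp only [cfQ, cfP, cfA, range_one, prod_singleton, gaussOrbit, Function.iterate_zero_apply,
      Int.fract]
    push_cast
    ring
  | more k ih₀ ih₁ =>
    have ht := (gaussOrbit_pos hα k).ne'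
    simp only [cfQ, cfP, prod_range_succ]
    push_cast
    rw [show ((cfA α (k + 1) : ℝ) * cfQ α (k + 1) + cfQ α k) * α -
        ((cfA α (k + 1) : ℝ) * cfP α (k + 1) + cfP α k) =
        (cfA α (k + 1) : ℝ) * ((cfQ α (k + 1) : ℝ) * α - cfP α (k + 1)) +
          ((cfQ α k : ℝ) * α - cfP α k) by ring, ih₀, ih₁, cfA_succ, prod_range_succ]
    field_simp
    ring

theorem cfZeta_eq_prod (hα : Irrational α) (k : ℕ) :
    cfZeta α k = ∏ i ∈ range k, gaussOrbit α i := by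
  rw [cfZeta, cfQ_mul_sub_cfP hα, abs_mul, abs_neg_one_pow, one_mul,
    abs_of_pos (prod_pos fun i _ => gaussOrbit_pos hα i)]

theorem cfZeta_pos (hα : Irrational α) (k : ℕ) : 0 < cfZeta α k := by
  rw [cfZeta_eq_prod hα]
  exact prod_pos fun i _ => gaussOrbit_pos hα i

theorem cfZeta_eq_cfA_mul_add (hα : Irrational α) (k : ℕ) :
    cfZeta α k = cfA α (k + 1) * cfZeta α (k + 1) + cfZeta α (k + 2) := by
  have ht := (gaussOrbit_pos hα k).ne'
  simp only [cfZeta_eq_prod hα, prod_range_succ, cfA_succ]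
  field_simp
  ring

end ContinuedFraction

/-- If `ℓ ≥ 1` and the integers `z i` satisfy `|z i| ≤ a i - 1` for `i ≥ ℓ`,
then `∑_{i=ℓ}^∞ z i ζ i` converges absolutely and
`|∑_{i=ℓ}^∞ z i ζ i| ≤ a ℓ * ζ ℓ - ∑_{i=ℓ+2}^∞ ζ i < ζ (ℓ-1)`. -/
theorem upper_bound (α : ℝ) (hα : Irrational α) (l : ℕ) (hl : 1 ≤ l) (z : ℕ → ℤ)
    (hz : ∀ i, l ≤ i → |z i| ≤ cfA α i - 1) :
    Summable (fun i : ℕ => |(z (l + i) : ℝ) * cfZeta α (l + i)|) ∧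
    |∑' i : ℕ, (z (l + i) : ℝ) * cfZeta α (l + i)|
      ≤ (cfA α l : ℝ) * cfZeta α l - ∑' i : ℕ, cfZeta α (l + 2 + i) ∧
    (cfA α l : ℝ) * cfZeta α l - ∑' i : ℕ, cfZeta α (l + 2 + i) < cfZeta α (l - 1) := by
  obtain ⟨m, rfl⟩ := Nat.exists_eq_add_of_le' hl
  have hpos := cfZeta_pos hα
  have hrec := cfZeta_eq_cfA_mul_add hα
  have hc : ∀ k, 0 < k → (1 : ℝ) ≤ cfA α k := fun k hk => by
    obtain ⟨k, rfl⟩ := Nat.exists_eq_add_of_le' hk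
    exact_mod_cast one_le_cfA_succ hα k
  have hx : ∀ i, m < i → |(z i : ℝ)| ≤ cfA α i - 1 := fun i hi => by exact_mod_cast hz i hi
  obtain ⟨hsum, hle⟩ := abs_tsum_le_of_recurrence hpos hrec hc m _ hx
  rw [Nat.add_sub_cancel]
  exact ⟨hsum, hle, mul_sub_tsum_lt_of_recurrence (c := fun k => (cfA α k : ℝ)) hpos hrec m⟩
end
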